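/- For all ξ = (ξ₁,ξ₂,ξ₃), η = (η₁,η₂,η₃) ∈ ℝ³ with η₁ ≠ 0 and η₂² + η₃² ≠ 0, the following identity holds: ξ₂² + ξ₃² = ((3η₁²+η₂²+η₃²)² / (4η₁²(η₂²+η₃²))) ξ₁² + N₂(ξ,η), where N₂(ξ,η) = (1/(4η₁²(η₂²+η₃²))) [ (−(3η₁²+η₂²+η₃²)ξ₁ + 2η₁η₂ξ₂ + 2η₁η₃ξ₃)·φ + ((3η₁²+η₂²+η₃²)ξ₁ − 2η₁η₂ξ₂ − 2η₁η₃ξ₃)·η₁∂_{η₁}φ + (2η₁η₃ξ₂ξ₃ − 2η₁η₂ξ₃² + (3η₁²+η₂²+η₃²)η₂ξ₁ − 2η₁(η₂²+η₃²)ξ₂)·∂_{η₂}φ + (−2η₁η₃ξ₂² + 2η₁η₂ξ₂ξ₃ + (3η₁²+η₂²+η₃²)η₃ξ₁ − 2η₁(η₂²+η₃²)ξ₃)·∂_{η₃}φ ]. -/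
import Mathlib


noncomputable section

/-- The resonance function φ(ξ,η) = ξ₁|ξ|² − (ξ₁−η₁)|ξ−η|² − η₁|η|². -/
def phiZK (ξ₁ ξ₂ ξ₃ η₁ η₂ η₃ : ℝ) : ℝ :=
  ξ₁ * (ξ₁ ^ 2 + ξ₂ ^ 2 + ξ₃ ^ 2)
    - (ξ₁ - η₁) * ((ξ₁ - η₁) ^ 2 + (ξ₂ - η₂) ^ 2 + (ξ₃ - η₃) ^ 2)
    - η₁ * (η₁ ^ 2 + η₂ ^ 2 + η₃ ^ 2)

/-- ∂_{η₁}φ = 3ξ₁²+ξ₂²+ξ₃²−6ξ₁η₁−2ξ₂η₂−2ξ₃η₃. -/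
def dphi1 (ξ₁ ξ₂ ξ₃ η₁ η₂ η₃ : ℝ) : ℝ :=
  3 * ξ₁ ^ 2 + ξ₂ ^ 2 + ξ₃ ^ 2 - 6 * ξ₁ * η₁ - 2 * ξ₂ * η₂ - 2 * ξ₃ * η₃

/-- ∂_{η₂}φ = 2ξ₁ξ₂−2ξ₁η₂−2η₁ξ₂. -/
def dphi2 (ξ₁ ξ₂ _ξ₃ η₁ η₂ _η₃ : ℝ) : ℝ :=
  2 * ξ₁ * ξ₂ - 2 * ξ₁ * η₂ - 2 * η₁ * ξ₂

/-- ∂_{η₃}φ = 2ξ₁ξ₃−2ξ₁η₃−2η₁ξ₃. -/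
def dphi3 (ξ₁ _ξ₂ ξ₃ η₁ _η₂ η₃ : ℝ) : ℝ :=
  2 * ξ₁ * ξ₃ - 2 * ξ₁ * η₃ - 2 * η₁ * ξ₃

/-- The quantity N₂(ξ,η) from the space-time resonance decomposition. -/
def N2ZK (ξ₁ ξ₂ ξ₃ η₁ η₂ η₃ : ℝ) : ℝ :=
  (1 / (4 * η₁ ^ 2 * (η₂ ^ 2 + η₃ ^ 2))) *
    ((-(3 * η₁ ^ 2 + η₂ ^ 2 + η₃ ^ 2) * ξ₁ + 2 * η₁ * η₂ * ξ₂ + 2 * η₁ * η₃ * ξ₃)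
        * phiZK ξ₁ ξ₂ ξ₃ η₁ η₂ η₃
      + ((3 * η₁ ^ 2 + η₂ ^ 2 + η₃ ^ 2) * ξ₁ - 2 * η₁ * η₂ * ξ₂ - 2 * η₁ * η₃ * ξ₃)
        * (η₁ * dphi1 ξ₁ ξ₂ ξ₃ η₁ η₂ η₃)
      + (2 * η₁ * η₃ * ξ₂ * ξ₃ - 2 * η₁ * η₂ * ξ₃ ^ 2
          + (3 * η₁ ^ 2 + η₂ ^ 2 + η₃ ^ 2) * η₂ * ξ₁ - 2 * η₁ * (η₂ ^ 2 + η₃ ^ 2) * ξ₂)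
        * dphi2 ξ₁ ξ₂ ξ₃ η₁ η₂ η₃
      + (-(2 * η₁ * η₃ * ξ₂ ^ 2) + 2 * η₁ * η₂ * ξ₂ * ξ₃
          + (3 * η₁ ^ 2 + η₂ ^ 2 + η₃ ^ 2) * η₃ * ξ₁ - 2 * η₁ * (η₂ ^ 2 + η₃ ^ 2) * ξ₃)
        * dphi3 ξ₁ ξ₂ ξ₃ η₁ η₂ η₃)

/-- ξ₂² + ξ₃² = ((3η₁²+η₂²+η₃²)²/(4η₁²(η₂²+η₃²))) ξ₁² + N₂(ξ,η)
for η₁ ≠ 0 and η₂²+η₃² ≠ 0. -/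
theorem xi_sq_identity (ξ₁ ξ₂ ξ₃ η₁ η₂ η₃ : ℝ) (hη₁ : η₁ ≠ 0)
    (h23 : η₂ ^ 2 + η₃ ^ 2 ≠ 0) :
    ξ₂ ^ 2 + ξ₃ ^ 2
      = ((3 * η₁ ^ 2 + η₂ ^ 2 + η₃ ^ 2) ^ 2 / (4 * η₁ ^ 2 * (η₂ ^ 2 + η₃ ^ 2))) * ξ₁ ^ 2
        + N2ZK ξ₁ ξ₂ ξ₃ η₁ η₂ η₃ := by
  unfold N2ZK phiZK dphi1 dphi2 dphi3
  field_simp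
  ring
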